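/- Define g : ℝ → ℝ by g(θ) = −cos θ · sin θ · (1 − cos²θ)^(−1/2) for θ with sin θ ≠ 0 (and g(θ) = 0 when sin θ = 0). Then for almost every θ ∈ (0, 2π) one has g(θ) = −cos θ · sgn(sin θ), hence |g(θ)| ≤ 1 almost everywhere and g belongs to L²((0, 2π)). In particular the L₍₀₎-trace L₍₀₎u = −x₁x₂·u(x)|_{|x|=1} of the solution u(x) = (1 − x₁²)^(−1/2) of the wave equation, parametrized by x = (cos θ, sin θ), belongs to L²(∂K). -/

import Mathlib

/-! Since `1 - cos² θ = sin² θ`, the factor `sin θ · (1 - cos² θ)^(-1/2)` is `sgn (sin θ)` (for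
every `θ`, even where `sin θ = 0`), so the trace is a measurable function bounded by `1`, hence in
`L²` of the finite interval `(0, 2π)`. -/

open Real MeasureTheory

namespace Real

theorem measurable_sign : Measurable Real.sign :=
  measurable_const.ite measurableSet_Iio (measurable_const.ite measurableSet_Ioi measurable_const)

theorem abs_sign_le_one (r : ℝ) : |Real.sign r| ≤ 1 := by
  rcases sign_apply_eq r with h | h | h <;> simp [h]

/-- At `r = 0` both sides vanish, since `0 ^ x = 0` for `x ≠ 0`. -/
theorem mul_sq_rpow_neg_half (r : ℝ) : r * (r ^ 2) ^ (-(1 / 2 : ℝ)) = Real.sign r := by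
  rw [rpow_neg (sq_nonneg r), ← sqrt_eq_rpow, sqrt_sq_eq_abs]
  rcases lt_trichotomy r 0 with h | rfl | h
  · simp [abs_of_neg h, sign_of_neg h, h.ne]
  · simp
  · simp [abs_of_pos h, sign_of_pos h, h.ne']

end Real

theorem neg_cos_mul_sin_mul_one_sub_cos_sq_rpow (θ : ℝ) :
    -cos θ * sin θ * (1 - cos θ ^ 2) ^ (-(1 / 2 : ℝ)) = -cos θ * Real.sign (sin θ) := by
  rw [← sin_sq, mul_assoc, Real.mul_sq_rpow_neg_half]

/-- The `L₍₀₎`-trace of the solution `u(x) = (1 − x₁²)^(−1/2)` of the wave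
equation, namely `g(θ) = −cos θ · sin θ · (1 − cos²θ)^(−1/2)` on the unit circle (set to `0`
where `sin θ = 0`), equals `−cos θ · sgn(sin θ)` almost everywhere on `(0, 2π)`, is bounded
in absolute value by `1` almost everywhere, and belongs to `L²((0, 2π))`. -/
theorem L0_trace_in_L2 :
    let g : ℝ → ℝ := fun θ =>
      if Real.sin θ = 0 then 0
      else -Real.cos θ * Real.sin θ * (1 - (Real.cos θ) ^ 2) ^ (-(1 / 2 : ℝ))
    (∀ᵐ θ ∂(volume.restrict (Set.Ioo (0:ℝ) (2 * π))),
        g θ = -Real.cos θ * Real.sign (Real.sin θ)) ∧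
    (∀ᵐ θ ∂(volume.restrict (Set.Ioo (0:ℝ) (2 * π))), |g θ| ≤ 1) ∧
    MemLp g 2 (volume.restrict (Set.Ioo (0:ℝ) (2 * π))) := by
  intro g
  have hg : g = fun θ => -cos θ * Real.sign (sin θ) := by
    funext θ
    by_cases hs : sin θ = 0
    · simp [g, hs]
    · simp only [g, if_neg hs, neg_cos_mul_sin_mul_one_sub_cos_sq_rpow]
  have hbound (θ : ℝ) : |g θ| ≤ 1 := by
    rw [hg, abs_mul, abs_neg]
    exact mul_le_one₀ (abs_cos_le_one θ) (abs_nonneg _) (Real.abs_sign_le_one _)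
  have hmeas : Measurable g :=
    hg ▸ measurable_cos.neg.mul (Real.measurable_sign.comp measurable_sin)
  refine ⟨ae_of_all _ (congrFun hg), ae_of_all _ hbound, ?_⟩
  exact MemLp.of_bound hmeas.aestronglyMeasurable 1
    (ae_of_all _ fun θ => (norm_eq_abs _).trans_le (hbound θ))
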